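/- arXiv:1701.07514 — 6 statements merged into one kernel-verified Lean document; each statement's English description precedes it below -/
import Mathlib

section
/- Suppose σ: [r₀, ∞) → [0, ∞) satisfies ∫_{r₀}^{∞} σ(r) dr = +∞ and √(U(x)) ≥ σ(|x|) for all x ∈ Ω with |x| ≥ r₀. Then there exists M > 0 such that every u ∈ W^{1,2}((T₋, T₊); ℝⁿ) with u((T₋,T₊)) ⊂ Ω and action 𝒜(u) ≤ a satisfies ‖u‖_{L^∞} ≤ M. (Key step: if |u(t̄)| = M for some t̄ then a ≥ √2 ∫_{r₀}^{M} σ(s) ds.) -/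
open MeasureTheory Set Filter
open scoped RealInnerProductSpace Topology

lemma norm_hasDerivAt_aux {n : ℕ} {u : ℝ → EuclideanSpace ℝ (Fin n)}
    {v : EuclideanSpace ℝ (Fin n)} {t : ℝ} (hu : HasDerivAt u v t) (h0 : u t ≠ 0) :
    HasDerivAt (fun s => ‖u s‖) (⟪u t, v⟫ / ‖u t‖) t := by
  have h1 : HasDerivAt (fun s => ⟪u s, u s⟫) (⟪u t, v⟫ + ⟪v, u t⟫) t :=
    hu.inner ℝ hu
  have h2 : (⟪u t, u t⟫) ≠ 0 := inner_self_ne_zero.2 h0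
  have h3 := h1.sqrt h2
  have h4 : (fun s => Real.sqrt ⟪u s, u s⟫) = fun s => ‖u s‖ := by
    funext s
    rw [real_inner_self_eq_norm_mul_norm, Real.sqrt_mul_self (norm_nonneg _)]
  rw [h4] at h3
  have h5 : Real.sqrt ⟪u t, u t⟫ = ‖u t‖ := by
    rw [real_inner_self_eq_norm_mul_norm, Real.sqrt_mul_self (norm_nonneg _)]
  convert h3 using 1
  rw [h5, real_inner_comm v (u t)]
  have : ‖u t‖ ≠ 0 := norm_ne_zero_iff.2 h0
  field_simp
  ring


/-- Uniform `L^∞` bound (20): if `√U ≥ σ(|x|)` on `Ω` for `|x| ≥ r₀` with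
`∫_{r₀}^∞ σ = +∞`, then there is `M > 0` bounding in `L^∞` every curve in `Ω`
starting in `{|x| ≤ r₀}` whose action is at most `a`.  The key step is that if
`|u(t̄)| = M` for some `t̄` then `a ≥ √2 ∫_{r₀}^M σ(s) ds`. -/
theorem linfty_bound_of_action_bound (n : ℕ) (Ω : Set (EuclideanSpace ℝ (Fin n)))
    (hΩ : IsOpen Ω) (U : EuclideanSpace ℝ (Fin n) → ℝ)
    (hUc : Continuous U) (hUnn : ∀ x ∈ Ω, 0 ≤ U x)
    (r₀ : ℝ) (hr₀ : 0 < r₀) (σ : ℝ → ℝ) (hσmeas : Measurable σ)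
    (hσnn : ∀ r, r₀ ≤ r → 0 ≤ σ r)
    (hσdiv : Tendsto (fun R => ∫ r in r₀..R, σ r) atTop atTop)
    (hUσ : ∀ x ∈ Ω, r₀ ≤ ‖x‖ → σ ‖x‖ ≤ Real.sqrt (U x))
    (a : ℝ) (ha : 0 < a) :
    ∃ M > 0, ∀ (Tm Tp : ℝ), Tm < Tp →
      ∀ (u u' : ℝ → EuclideanSpace ℝ (Fin n)),
        ContinuousOn u (Icc Tm Tp) →
        (∀ t ∈ Ioo Tm Tp, HasDerivAt u (u' t) t) →
        (∀ t ∈ Ioo Tm Tp, u t ∈ Ω) →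
        ‖u Tm‖ ≤ r₀ →
        IntegrableOn (fun t => ‖u' t‖ ^ 2) (Ioo Tm Tp) →
        (∫ t in Ioo Tm Tp, ((1 : ℝ) / 2 * ‖u' t‖ ^ 2 + U (u t))) ≤ a →
        ∀ t ∈ Icc Tm Tp, ‖u t‖ ≤ M := by
  have hsqrt2 : (0:ℝ) < Real.sqrt 2 := by positivity
  -- σ is locally integrable on [r₀, ∞)
  have hσint : ∀ R : ℝ, IntegrableOn σ (Ioc r₀ R) := by
    intro R
    by_contra hR
    have h0 : ∀ R' : ℝ, max R r₀ ≤ R' → ¬ IntervalIntegrable σ volume r₀ R' := by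
      intro R' hR' hI
      exact hR (hI.1.mono_set (Ioc_subset_Ioc le_rfl ((le_max_left _ _).trans hR')))
    have h1 : ∀ᶠ R' in atTop, (∫ r in r₀..R', σ r) = 0 := by
      filter_upwards [eventually_ge_atTop (max R r₀)] with R' hR'
      exact intervalIntegral.integral_undef (h0 R' hR')
    have h2 := hσdiv.eventually_ge_atTop 1
    rcases (h1.and h2).exists with ⟨R', hR'0, hR'1⟩
    rw [hR'0] at hR'1
    linarith
  have hII : ∀ b c : ℝ, IntervalIntegrable σ volume b c → True := fun _ _ _ => trivial
  have hINT : ∀ R : ℝ, r₀ ≤ R → IntervalIntegrable σ volume r₀ R := by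
    intro R hR
    constructor
    · exact hσint R
    · rw [Ioc_eq_empty (by linarith)]
      exact integrableOn_empty
  -- choose M
  obtain ⟨M, hMgt, hMa⟩ : ∃ M, r₀ + 1 < M ∧ a < Real.sqrt 2 * ∫ r in Ioo (r₀+1) M, σ r := by
    obtain ⟨M, hM1, hM2⟩ :=
      ((hσdiv.eventually_ge_atTop ((∫ r in r₀..(r₀+1), σ r) + (a + 1) / Real.sqrt 2)).and
        (eventually_ge_atTop (r₀ + 2))).exists
    refine ⟨M, by linarith, ?_⟩
    have hsub : (∫ r in (r₀+1)..M, σ r)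
        = (∫ r in r₀..M, σ r) - ∫ r in r₀..(r₀+1), σ r :=
      (intervalIntegral.integral_interval_sub_left (hINT M (by linarith))
        (hINT (r₀+1) (by linarith))).symm
    have hIoo : (∫ r in Ioo (r₀+1) M, σ r) = ∫ r in (r₀+1)..M, σ r := by
      rw [intervalIntegral.integral_of_le (by linarith), integral_Ioc_eq_integral_Ioo]
    rw [hIoo, hsub]
    have h3 : (a + 1) / Real.sqrt 2 ≤ (∫ r in r₀..M, σ r) - ∫ r in r₀..(r₀+1), σ r := by
      linarith
    have := mul_le_mul_of_nonneg_left h3 hsqrt2.le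
    rw [mul_div_cancel₀ _ (ne_of_gt hsqrt2)] at this
    linarith
  refine ⟨M, by linarith, ?_⟩
  intro Tm Tp hT u u' hu hderiv hmem hu0 hint haction
  -- continuity of the norm of u
  have hφc : ContinuousOn (fun t => ‖u t‖) (Icc Tm Tp) := hu.norm
  set φ : ℝ → ℝ := fun t => ‖u t‖ with hφdef
  -- the integrand is integrable and nonnegative on Ioo Tm Tp
  set h : ℝ → ℝ := fun t => (1:ℝ)/2 * ‖u' t‖ ^ 2 + U (u t) with hhdef
  have hhint : IntegrableOn h (Ioo Tm Tp) := by
    apply Integrable.add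
    · exact (hint.const_mul ((1:ℝ)/2))
    · exact ((hUc.comp_continuousOn hu).integrableOn_Icc).mono_set Ioo_subset_Icc_self
  have hh_nonneg : 0 ≤ᵐ[volume.restrict (Ioo Tm Tp)] h := by
    filter_upwards [ae_restrict_mem measurableSet_Ioo] with t ht
    have := hUnn _ (hmem t ht)
    have h2 : (0:ℝ) ≤ ‖u' t‖ ^ 2 := sq_nonneg _
    simp only [hhdef, Pi.zero_apply]
    linarith
  -- key claim: no interior point has norm > M
  have key : ∀ tb ∈ Ioo Tm Tp, ¬ (M < ‖u tb‖) := by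
    intro tb htb hMt
    -- last time before tb at which the norm is ≤ r₀
    set S : Set ℝ := Icc Tm tb ∩ φ ⁻¹' (Iic r₀) with hSdef
    have hS_closed : IsClosed S :=
      (hφc.mono (Icc_subset_Icc le_rfl htb.2.le)).preimage_isClosed_of_isClosed
        isClosed_Icc isClosed_Iic
    have hTmS : Tm ∈ S := ⟨⟨le_rfl, htb.1.le⟩, hu0⟩
    have hS_bdd : BddAbove S := ⟨tb, fun x hx => hx.1.2⟩
    set s₁ : ℝ := sSup S with hs₁def
    have hs₁S : s₁ ∈ S := hS_closed.csSup_mem ⟨Tm, hTmS⟩ hS_bdd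
    have hs₁Tm : Tm ≤ s₁ := le_csSup hS_bdd hTmS
    have hs₁tb : s₁ ≤ tb := hs₁S.1.2
    have hφs₁ : φ s₁ ≤ r₀ := hs₁S.2
    have hs₁lt : s₁ < tb := by
      rcases lt_or_eq_of_le hs₁tb with h | h
      · exact h
      · exfalso; rw [h] at hφs₁; simp only [hφdef] at hφs₁; linarith
    have hgt : ∀ t ∈ Ioc s₁ tb, r₀ < φ t := by
      intro t ht
      by_contra hc
      push_neg at hc
      have : t ∈ S := ⟨⟨hs₁Tm.trans ht.1.le, ht.2⟩, hc⟩
      exact absurd (le_csSup hS_bdd this) (not_le.2 ht.1)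
    have hIooSub : Ioo s₁ tb ⊆ Ioo Tm Tp :=
      fun x hx => ⟨lt_of_le_of_lt hs₁Tm hx.1, lt_trans hx.2 htb.2⟩
    -- derivative of the norm
    set v : ℝ → EuclideanSpace ℝ (Fin n) := deriv u with hvdef
    have hv : ∀ t ∈ Ioo Tm Tp, v t = u' t := fun t ht => (hderiv t ht).deriv
    set d : ℝ → ℝ := fun t => ⟪u t, v t⟫ / ‖u t‖ with hddef
    have hune : ∀ t ∈ Ioo s₁ tb, u t ≠ 0 := by
      intro t ht
      have := hgt t ⟨ht.1, ht.2.le⟩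
      simp only [hφdef] at this
      intro h0
      rw [h0, norm_zero] at this
      linarith
    have hd : ∀ t ∈ Ioo s₁ tb, HasDerivAt φ (d t) t := by
      intro t ht
      have h1 := norm_hasDerivAt_aux (hderiv t (hIooSub ht)) (hune t ht)
      simp only [hddef, hv t (hIooSub ht)]
      exact h1
    have hdbound : ∀ t ∈ Ioo s₁ tb, |d t| ≤ ‖u' t‖ := by
      intro t ht
      have h0 : (0:ℝ) < ‖u t‖ := norm_pos_iff.2 (hune t ht)
      simp only [hddef, hv t (hIooSub ht), abs_div, abs_norm]
      rw [div_le_iff₀ h0]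
      calc |⟪u t, u' t⟫| ≤ ‖u t‖ * ‖u' t‖ := abs_real_inner_le_norm _ _
        _ = ‖u' t‖ * ‖u t‖ := mul_comm _ _
    -- first hitting times
    set T : ℝ → Set ℝ := fun y => Icc s₁ tb ∩ φ ⁻¹' (Ici y) with hTdef
    have hT_closed : ∀ y, IsClosed (T y) := fun y =>
      (hφc.mono (Icc_subset_Icc hs₁Tm htb.2.le)).preimage_isClosed_of_isClosed
        isClosed_Icc isClosed_Ici
    have hT_ne : ∀ y ≤ M, (T y).Nonempty := by
      intro y hy
      exact ⟨tb, ⟨hs₁tb, le_rfl⟩, by simp only [hφdef, mem_preimage, mem_Ici]; linarith⟩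
    have hT_bdd : ∀ y, BddBelow (T y) := fun y => ⟨s₁, fun x hx => hx.1.1⟩
    set G : ℝ → ℝ := fun y => sInf (T y) with hGdef
    have hGmem : ∀ y ≤ M, G y ∈ T y := fun y hy =>
      (hT_closed y).csInf_mem (hT_ne y hy) (hT_bdd y)
    have hGval : ∀ y ∈ Ioo (r₀+1) M, φ (G y) = y ∧ G y ∈ Ioo s₁ tb := by
      intro y hy
      have hyM : y ≤ M := hy.2.le
      have hmem' := hGmem y hyM
      have hGy1 : s₁ ≤ G y := hmem'.1.1
      have hGy2 : G y ≤ tb := hmem'.1.2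
      have hGy3 : y ≤ φ (G y) := hmem'.2
      have hs₁y : φ s₁ < y := by linarith [hy.1]
      have heq : φ (G y) = y := by
        by_contra hne
        have hlt : y < φ (G y) := lt_of_le_of_ne hGy3 (Ne.symm hne)
        have hGs₁ : s₁ < G y := by
          rcases lt_or_eq_of_le hGy1 with h | h
          · exact h
          · exfalso; rw [← h] at hlt; linarith
        obtain ⟨t, htmem, htval⟩ :=
          intermediate_value_Icc hGy1
            (hφc.mono (Icc_subset_Icc hs₁Tm (hGy2.trans htb.2.le)))
            (⟨hs₁y.le, hGy3⟩ : y ∈ Icc (φ s₁) (φ (G y)))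
        have htT : t ∈ T y := ⟨⟨htmem.1, htmem.2.trans hGy2⟩, by
          simp only [mem_preimage, mem_Ici]; exact htval.ge⟩
        have : G y ≤ t := csInf_le (hT_bdd y) htT
        have : t = G y := le_antisymm htmem.2 this
        rw [this] at htval
        exact hne htval
      refine ⟨heq, ?_, ?_⟩
      · rcases lt_or_eq_of_le hGy1 with h | h
        · exact h
        · exfalso; rw [← h] at heq; rw [heq] at hs₁y; linarith
      · rcases lt_or_eq_of_le hGy2 with h | h
        · exact h
        · exfalso; rw [h] at heq; simp only [hφdef] at heq; linarith [hy.2]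
    -- clamped hitting-time function, monotone hence measurable
    set c : ℝ → ℝ := fun y => max (r₀+1) (min y M) with hcdef
    have hc_range : ∀ y, r₀ + 1 ≤ c y ∧ c y ≤ M :=
      fun y => ⟨le_max_left _ _, max_le hMgt.le (min_le_right _ _)⟩
    have hc_id : ∀ y ∈ Ioo (r₀+1) M, c y = y := by
      intro y hy
      simp only [hcdef]
      rw [min_eq_left hy.2.le, max_eq_right hy.1.le]
    set Gc : ℝ → ℝ := fun y => G (c y) with hGcdef
    have hGc_mono : Monotone Gc := by
      intro y y' hyy'
      simp only [hGcdef]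
      refine csInf_le_csInf (hT_bdd _) (hT_ne _ (hc_range y').2) ?_
      intro x hx
      refine ⟨hx.1, ?_⟩
      simp only [mem_preimage, mem_Ici] at hx ⊢
      refine le_trans ?_ hx.2
      simp only [hcdef]
      exact max_le_max le_rfl (min_le_min hyy' le_rfl)
    have hGc_meas : Measurable Gc := hGc_mono.measurable
    set s : Set ℝ := Gc '' (Ioo (r₀+1) M) with hsdef
    have hGc_val : ∀ y ∈ Ioo (r₀+1) M, φ (Gc y) = y ∧ Gc y ∈ Ioo s₁ tb := by
      intro y hy
      have := hGval y hy
      simp only [hGcdef, hc_id y hy]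
      exact this
    have hs_sub : s ⊆ Ioo s₁ tb := by
      rintro x ⟨y, hy, rfl⟩
      exact (hGc_val y hy).2
    have hGc_inj : InjOn Gc (Ioo (r₀+1) M) := by
      intro y hy y' hy' heq
      have h1 := (hGc_val y hy).1
      have h2 := (hGc_val y' hy').1
      rw [← h1, ← h2, heq]
    have hs_meas : MeasurableSet s :=
      measurableSet_Ioo.image_of_measurable_injOn hGc_meas hGc_inj
    have hφs : φ '' s = Ioo (r₀+1) M := by
      simp only [hsdef, image_image]
      apply image_congr (fun y hy => (hGc_val y hy).1) |>.trans
      exact image_id _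
    have hφinj : InjOn φ s := by
      rintro x ⟨y, hy, rfl⟩ x' ⟨y', hy', rfl⟩ heq
      rw [(hGc_val y hy).1, (hGc_val y' hy').1] at heq
      rw [heq]
    have hder : ∀ x ∈ s, HasDerivWithinAt φ (d x) s x :=
      fun x hx => (hd x (hs_sub hx)).hasDerivWithinAt
    have hCOV : (∫ y in φ '' s, σ y) = ∫ x in s, |d x| • σ (φ x) :=
      integral_image_eq_integral_abs_deriv_smul hs_meas hder hφinj σ
    rw [hφs] at hCOV
    -- the integrand g
    set g : ℝ → ℝ := fun t => |d t| * σ (φ t) with hgdef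
    -- pointwise bound
    have hptwise : ∀ t ∈ Ioo s₁ tb, Real.sqrt 2 * g t ≤ h t := by
      intro t ht
      have hxΩ := hmem t (hIooSub ht)
      have hrφ : r₀ ≤ φ t := (hgt t ⟨ht.1, ht.2.le⟩).le
      have h1 : σ (φ t) ≤ Real.sqrt (U (u t)) := hUσ _ hxΩ hrφ
      have h2 : 0 ≤ σ (φ t) := hσnn _ hrφ
      have h3 : |d t| ≤ ‖u' t‖ := hdbound t ht
      have h4 : 0 ≤ U (u t) := hUnn _ hxΩ
      have h5 : Real.sqrt (U (u t)) ^ 2 = U (u t) := Real.sq_sqrt h4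
      have h6 : Real.sqrt 2 ^ 2 = 2 := Real.sq_sqrt (by norm_num)
      have h7 : (0:ℝ) ≤ |d t| := abs_nonneg _
      have h8 : (0:ℝ) ≤ Real.sqrt (U (u t)) := Real.sqrt_nonneg _
      simp only [hgdef, hhdef]
      nlinarith [sq_nonneg (‖u' t‖ - Real.sqrt 2 * Real.sqrt (U (u t))),
        mul_le_mul h1 h3 h7 h8, sq_nonneg (‖u' t‖ - |d t|)]
    -- measurability of g on the restricted measure
    have huae : AEMeasurable u (volume.restrict (Ioo s₁ tb)) :=
      (hu.mono fun x hx => Ioo_subset_Icc_self ((hIooSub hx))).aemeasurable measurableSet_Ioo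
    have hvmeas : Measurable v := measurable_deriv u
    have hdae : AEMeasurable d (volume.restrict (Ioo s₁ tb)) := by
      have h1 : AEMeasurable (fun t => ⟪u t, v t⟫) (volume.restrict (Ioo s₁ tb)) :=
        huae.inner hvmeas.aemeasurable
      exact h1.div huae.norm
    have hgae : AEMeasurable g (volume.restrict (Ioo s₁ tb)) :=
      (continuous_abs.measurable.comp_aemeasurable hdae).mul (hσmeas.comp_aemeasurable huae.norm)
    have hg_nonneg : 0 ≤ᵐ[volume.restrict (Ioo s₁ tb)] g := by
      filter_upwards [ae_restrict_mem measurableSet_Ioo] with t ht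
      simp only [Pi.zero_apply, hgdef]
      exact mul_nonneg (abs_nonneg _) (hσnn _ (hgt t ⟨ht.1, ht.2.le⟩).le)
    have hhint' : IntegrableOn h (Ioo s₁ tb) := hhint.mono_set hIooSub
    have hgint : IntegrableOn g (Ioo s₁ tb) := by
      refine Integrable.mono' hhint' hgae.aestronglyMeasurable ?_
      filter_upwards [ae_restrict_mem measurableSet_Ioo] with t ht
      have h1 := hptwise t ht
      have h2 : 0 ≤ g t := mul_nonneg (abs_nonneg _) (hσnn _ (hgt t ⟨ht.1, ht.2.le⟩).le)
      rw [Real.norm_eq_abs, abs_of_nonneg h2]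
      nlinarith [Real.sqrt_le_sqrt (show (1:ℝ) ≤ 2 by norm_num), Real.sqrt_one]
    -- chain of inequalities
    have hA2 : (∫ x in s, |d x| • σ (φ x)) = ∫ x in s, g x := by
      simp only [hgdef, smul_eq_mul]
    have hA3 : (∫ x in s, g x) ≤ ∫ x in Ioo s₁ tb, g x :=
      setIntegral_mono_set hgint hg_nonneg (HasSubset.Subset.eventuallyLE hs_sub)
    have hA4 : Real.sqrt 2 * (∫ x in Ioo s₁ tb, g x) ≤ ∫ x in Ioo s₁ tb, h x := by
      rw [← integral_const_mul]
      refine integral_mono_ae (hgint.const_mul _) hhint' ?_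
      filter_upwards [ae_restrict_mem measurableSet_Ioo] with t ht
      exact hptwise t ht
    have hA5 : (∫ x in Ioo s₁ tb, h x) ≤ ∫ x in Ioo Tm Tp, h x :=
      setIntegral_mono_set hhint hh_nonneg (HasSubset.Subset.eventuallyLE hIooSub)
    have hA6 : (∫ x in Ioo Tm Tp, h x) ≤ a := haction
    have hfinal : Real.sqrt 2 * (∫ r in Ioo (r₀+1) M, σ r) ≤ a := by
      calc Real.sqrt 2 * (∫ r in Ioo (r₀+1) M, σ r)
          = Real.sqrt 2 * ∫ x in s, g x := by rw [hCOV, hA2]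
        _ ≤ Real.sqrt 2 * ∫ x in Ioo s₁ tb, g x :=
            mul_le_mul_of_nonneg_left hA3 hsqrt2.le
        _ ≤ ∫ x in Ioo s₁ tb, h x := hA4
        _ ≤ ∫ x in Ioo Tm Tp, h x := hA5
        _ ≤ a := hA6
    linarith
  -- conclude on the closed interval
  intro t ht
  by_contra hcon
  push_neg at hcon
  have hexists : ∃ tb ∈ Ioo Tm Tp, M < ‖u tb‖ := by
    rcases lt_or_eq_of_le ht.1 with h1 | h1
    · rcases lt_or_eq_of_le ht.2 with h2 | h2
      · exact ⟨t, ⟨h1, h2⟩, hcon⟩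
      · -- t = Tp
        subst h2
        have hc : ContinuousWithinAt (fun s => ‖u s‖) (Icc Tm t) t :=
          (hu.norm).continuousWithinAt ht
        have hev : ∀ᶠ x in 𝓝[Icc Tm t] t, M < ‖u x‖ :=
          hc.eventually (eventually_gt_nhds hcon)
        have hev2 : ∀ᶠ x in 𝓝[Ioo Tm t] t, M < ‖u x‖ :=
          hev.filter_mono (nhdsWithin_mono _ Ioo_subset_Icc_self)
        have hne : (𝓝[Ioo Tm t] t).NeBot := right_nhdsWithin_Ioo_neBot h1
        obtain ⟨x, hx1, hx2⟩ := (hev2.and eventually_mem_nhdsWithin).exists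
        exact ⟨x, hx2, hx1⟩
    · -- t = Tm
      exfalso
      rw [← h1] at hcon
      linarith
  obtain ⟨tb, htb, hMtb⟩ := hexists
  exact key tb htb hMtb
end

section
/- Let u: [t_ρ, T₊) → ℝⁿ be a C¹ solution of the energy identity ½|u̇(t)|² = U(u(t)) with u(t) ≠ p for all t, where U(x) ≤ c|x − p|² on the range of u. If lim_{t → T₊} u(t) = p, then T₊ = +∞. (Proof via the differential inequality d/dt |u − p| ≥ −|u̇| = −√(2U(u)) ≥ −√(2c)|u − p|, i.e. Gronwall: |u(t) − p| ≥ |u(t_ρ) − p| e^{−√(2c)(t − t_ρ)} > 0.) -/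
open Set Filter Topology

/-!
By the energy identity the speed is at most `√(2c) |u - p|`, so `|u - p|` can decay at most
exponentially: running Grönwall's inequality backwards from `t` to `tρ` gives
`|u tρ - p| ≤ |u t - p| e^{√(2c) (t - tρ)}`. If `u` tended to `p` at a finite time `Tp`, the
right-hand side would tend to `0`, forcing `u tρ = p`.
-/

theorem norm_le_sqrt_two_mul_mul_of_half_sq_le {a b c : ℝ} (ha : 0 ≤ a) (hb : 0 ≤ b)
    (h : 1 / 2 * a ^ 2 ≤ c * b ^ 2) : a ≤ √(2 * c) * b :=
  calc a = √(a ^ 2) := (Real.sqrt_sq ha).symm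
    _ ≤ √(2 * c * b ^ 2) := Real.sqrt_le_sqrt (by linarith)
    _ = √(2 * c) * b := by rw [Real.sqrt_mul' _ (sq_nonneg b), Real.sqrt_sq hb]

section GronwallBackward

variable {E : Type*} [NormedAddCommGroup E] [NormedSpace ℝ E] {f f' : ℝ → E} {K a b : ℝ}

-- Forward Grönwall applied to the time-reversed curve `τ ↦ f (a + b - τ)`.
theorem norm_le_norm_mul_exp_of_norm_deriv_le (hab : a ≤ b)
    (hf : ∀ t ∈ Icc a b, HasDerivAt f (f' t) t)
    (bound : ∀ t ∈ Icc a b, ‖f' t‖ ≤ K * ‖f t‖) :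
    ‖f a‖ ≤ ‖f b‖ * Real.exp (K * (b - a)) := by
  have hrefl : ∀ τ ∈ Icc a b, a + b - τ ∈ Icc a b := fun τ hτ =>
    ⟨by linarith [hτ.2], by linarith [hτ.1]⟩
  have hg : ∀ τ ∈ Icc a b, HasDerivAt (fun τ => f (a + b - τ)) (-f' (a + b - τ)) τ :=
    fun τ hτ => (hf _ (hrefl τ hτ)).comp_const_sub (a + b) τ
  have key := norm_le_gronwallBound_of_norm_deriv_right_le (δ := ‖f b‖) (K := K) (ε := 0)
    (fun τ hτ => (hg τ hτ).continuousAt.continuousWithinAt)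
    (fun τ hτ => (hg τ (Ico_subset_Icc_self hτ)).hasDerivWithinAt)
    (by simp) (fun τ hτ => by simpa using bound _ (hrefl τ (Ico_subset_Icc_self hτ)))
    b (right_mem_Icc.2 hab)
  simpa [gronwallBound_ε0] using key

theorem eq_zero_of_norm_deriv_le_of_tendsto_zero {T : ℝ} (hK : 0 ≤ K) (haT : a < T)
    (hf : ∀ t ∈ Ico a T, HasDerivAt f (f' t) t)
    (bound : ∀ t ∈ Ico a T, ‖f' t‖ ≤ K * ‖f t‖)
    (hlim : Tendsto f (𝓝[<] T) (𝓝 0)) : f a = 0 := by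
  have lower : ∀ t ∈ Ico a T, ‖f a‖ * Real.exp (-(K * (T - a))) ≤ ‖f t‖ := by
    intro t ht
    have hsub : Icc a t ⊆ Ico a T := Icc_subset_Ico_right ht.2
    have h := norm_le_norm_mul_exp_of_norm_deriv_le ht.1 (fun s hs => hf s (hsub hs))
      (fun s hs => bound s (hsub hs))
    rw [← div_le_iff₀ (Real.exp_pos _), div_eq_mul_inv, ← Real.exp_neg] at h
    calc ‖f a‖ * Real.exp (-(K * (T - a))) ≤ ‖f a‖ * Real.exp (-(K * (t - a))) := by
          gcongr; nlinarith [ht.2]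
      _ ≤ ‖f t‖ := h
  have hle : ‖f a‖ * Real.exp (-(K * (T - a))) ≤ 0 :=
    ge_of_tendsto (by simpa using hlim.norm) <| by
      filter_upwards [Ioo_mem_nhdsLT haT] with t ht using lower t (Ioo_subset_Ico_self ht)
  exact norm_le_zero_iff.mp (nonpos_of_mul_nonpos_left hle (Real.exp_pos _))

end GronwallBackward

theorem infinite_time_to_reach_degenerate_zero_general (n : ℕ)
    (U : EuclideanSpace ℝ (Fin n) → ℝ)
    (p : EuclideanSpace ℝ (Fin n)) (c : ℝ)
    (tρ Tp : ℝ) (htT : tρ < Tp)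
    (u u' : ℝ → EuclideanSpace ℝ (Fin n))
    (hu : ∀ t ∈ Ico tρ Tp, HasDerivAt u (u' t) t)
    (hne : ∀ t ∈ Ico tρ Tp, u t ≠ p)
    (hquad : ∀ t ∈ Ico tρ Tp, U (u t) ≤ c * ‖u t - p‖ ^ 2)
    (hen : ∀ t ∈ Ico tρ Tp, (1 : ℝ) / 2 * ‖u' t‖ ^ 2 = U (u t))
    (hlim : Tendsto u (𝓝[<] Tp) (𝓝 p)) :
    False := by
  have speed : ∀ t ∈ Ico tρ Tp, ‖u' t‖ ≤ √(2 * c) * ‖u t - p‖ := fun t ht =>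
    norm_le_sqrt_two_mul_mul_of_half_sq_le (norm_nonneg _) (norm_nonneg _)
      ((hen t ht).trans_le (hquad t ht))
  have reached : u tρ - p = 0 :=
    eq_zero_of_norm_deriv_le_of_tendsto_zero (Real.sqrt_nonneg _) htT
      (fun t ht => (hu t ht).sub_const p) speed (by simpa using hlim.sub_const p)
  exact hne tρ (left_mem_Ico.2 htT) (sub_eq_zero.1 reached)

/-- Lemma 2.4: a zero-energy solution approaching a point `p` where
`U(x) ≤ c|x−p|²` cannot reach it in finite time.  Formulated in contrapositive
form: if `T₊` is finite (a real number), the hypotheses are contradictory. -/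
theorem infinite_time_to_reach_degenerate_zero (n : ℕ)
    (U : EuclideanSpace ℝ (Fin n) → ℝ) (hUc : Continuous U)
    (p : EuclideanSpace ℝ (Fin n)) (c : ℝ) (hc : 0 < c)
    (tρ Tp : ℝ) (htT : tρ < Tp)
    (u u' : ℝ → EuclideanSpace ℝ (Fin n))
    (hu : ∀ t ∈ Ico tρ Tp, HasDerivAt u (u' t) t)
    (hu'c : ContinuousOn u' (Ico tρ Tp))
    (hne : ∀ t ∈ Ico tρ Tp, u t ≠ p)
    (hquad : ∀ t ∈ Ico tρ Tp, U (u t) ≤ c * ‖u t - p‖ ^ 2)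
    (hen : ∀ t ∈ Ico tρ Tp, (1 : ℝ) / 2 * ‖u' t‖ ^ 2 = U (u t))
    (hlim : Tendsto u (𝓝[<] Tp) (𝓝 p)) :
    False :=
  infinite_time_to_reach_degenerate_zero_general n U p c tρ Tp htT u u' hu hne hquad hen hlim
end

section
/- Consider the ODE g'(s) = −λ₁ g(s) / √(s² λ_η² − λ₁² g²(s)) with initial condition g(1) = λ_η/λ₁, where λ₁, λ_η > 0. Then this problem has a solution g defined on [1, ∞), g is positive and decreasing, and g(s) < s λ_η/λ₁ for s > 1 (so that the square root is well-defined and positive for s > 1). -/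
/-!
With `c = λ₁ / λ_η` the right-hand side depends on `(s, g)` only through `v = s / g`: it equals
`-c / √(v² - c²)`. Taking `v ∈ [c, ∞)` as the parameter turns the equation into the separable
`dG / G = -k(v) dv` with `k(v) = c / (c v + √(v² - c²))`, which is continuous at the singular point
`v = c`. So the solution curve is `v ↦ (v G(v), G(v))` with `G(v) = exp (-∫_c^v k) / c`.
Its `s`-coordinate is strictly increasing (its derivative is `G (1 - v k) > 0` for `v > c`) and
unbounded (`k(t) ≤ (2c / (2c + 1)) / t` for `t ≥ 2c`), so it can be inverted on `[1, ∞)`.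
-/

open Set Real Filter Topology MeasureTheory

section InverseOnIci

variable {α β : Type*} [LinearOrder α] [LinearOrder β] [Nonempty α] {f : α → β}

theorem StrictMonoOn.strictMonoOn_invFunOn {s : Set α} {t : Set β} (hf : StrictMonoOn f s)
    (hsurj : SurjOn f s t) : StrictMonoOn (Function.invFunOn f s) t := fun x hx y hy hxy => by
  have hmaps := hsurj.mapsTo_invFunOn
  rwa [← hf.lt_iff_lt (hmaps hx) (hmaps hy), hsurj.rightInvOn_invFunOn hx,
    hsurj.rightInvOn_invFunOn hy]

variable [TopologicalSpace α] [OrderTopology α] [DenselyOrdered α] [TopologicalSpace β]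
  [OrderTopology β] {a : α}

theorem StrictMonoOn.continuousOn_invFunOn_Ici (hf : StrictMonoOn f (Ici a))
    (hbij : BijOn f (Ici a) (Ici (f a))) :
    ContinuousOn (Function.invFunOn f (Ici a)) (Ici (f a)) := by
  set u := Function.invFunOn f (Ici a)
  have hinv : InvOn u f (Ici a) (Ici (f a)) := hbij.invOn_invFunOn
  have hmaps : MapsTo u (Ici (f a)) (Ici a) := hbij.surjOn.mapsTo_invFunOn
  have hu : StrictMonoOn u (Ici (f a)) := hf.strictMonoOn_invFunOn hbij.surjOn
  have hu_img : u '' Ici (f a) = Ici a := (hinv.symm.bijOn hmaps hbij.mapsTo).image_eq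
  intro s hs
  rcases (mem_Ici.1 hs).eq_or_lt with rfl | hlt
  · refine hu.continuousWithinAt_right_of_image_mem_nhdsWithin self_mem_nhdsWithin ?_
    rw [hu_img, hinv.1 self_mem_Ici]
    exact self_mem_nhdsWithin
  · have hus : a < u s := (hmaps hs).lt_of_ne fun h => hlt.ne (by rw [h, hinv.2 hs])
    refine (hu.continuousAt_of_image_mem_nhds (Ici_mem_nhds hlt) ?_).continuousWithinAt
    rw [hu_img]
    exact Ici_mem_nhds hus

end InverseOnIci

namespace SingularIVP

theorem rhs_homogeneous {l₁ lη g : ℝ} (hη : 0 < lη) (hg : 0 < g) (s : ℝ) :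
    -(l₁ * g) / √(s ^ 2 * lη ^ 2 - l₁ ^ 2 * g ^ 2) =
      -(l₁ / lη) / √((s / g) ^ 2 - (l₁ / lη) ^ 2) := by
  have h : s ^ 2 * lη ^ 2 - l₁ ^ 2 * g ^ 2 = (g * lη) ^ 2 * ((s / g) ^ 2 - (l₁ / lη) ^ 2) := by
    field_simp
  rw [h, sqrt_mul (sq_nonneg _), sqrt_sq (by positivity)]
  field_simp

noncomputable def kernel (c t : ℝ) : ℝ := c / (c * t + √(t ^ 2 - c ^ 2))

noncomputable def kernelIntegral (c v : ℝ) : ℝ := ∫ t in c..v, kernel c t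

/-- With `c = λ₁ / λ_η`, the solution curve is `v ↦ (paramS c v, paramG c v)` in the `(s, g)`-plane,
parametrised by `v = s / g`. -/
noncomputable def paramG (c v : ℝ) : ℝ := exp (-kernelIntegral c v) / c

noncomputable def paramS (c v : ℝ) : ℝ := v * paramG c v

noncomputable def param (c : ℝ) : ℝ → ℝ := Function.invFunOn (paramS c) (Ici c)

noncomputable def solution (c : ℝ) : ℝ → ℝ := paramG c ∘ param c

variable {c : ℝ}

theorem kernel_pos (hc : 0 < c) {t : ℝ} (ht : 0 < t) : 0 < kernel c t :=
  div_pos hc (by positivity)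

theorem continuousOn_kernel (hc : 0 < c) : ContinuousOn (kernel c) (Ioi 0) :=
  continuousOn_const.div (by fun_prop) fun t ht => by
    have : 0 < t := ht
    positivity

theorem intervalIntegrable_kernel (hc : 0 < c) {a b : ℝ} (ha : 0 < a) (hb : 0 < b) :
    IntervalIntegrable (kernel c) volume a b :=
  ((continuousOn_kernel hc).mono fun _ hx => (lt_min ha hb).trans_le hx.1).intervalIntegrable

theorem hasDerivAt_kernelIntegral (hc : 0 < c) {v : ℝ} (hv : 0 < v) :
    HasDerivAt (kernelIntegral c) (kernel c v) v :=
  intervalIntegral.integral_hasDerivAt_right (intervalIntegrable_kernel hc hc hv)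
    ((continuousOn_kernel hc).stronglyMeasurableAtFilter isOpen_Ioi v hv)
    ((continuousOn_kernel hc).continuousAt (Ioi_mem_nhds hv))

theorem strictMonoOn_kernelIntegral (hc : 0 < c) : StrictMonoOn (kernelIntegral c) (Ici c) := by
  refine strictMonoOn_of_deriv_pos (convex_Ici c)
    (fun v hv => (hasDerivAt_kernelIntegral hc (hc.trans_le hv)).continuousAt.continuousWithinAt)
    fun v hv => ?_
  rw [interior_Ici] at hv
  rw [(hasDerivAt_kernelIntegral hc (hc.trans hv)).deriv]
  exact kernel_pos hc (hc.trans hv)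

theorem one_sub_mul_kernel (hc : 0 < c) {v : ℝ} (hv : 0 < v) :
    1 - v * kernel c v = √(v ^ 2 - c ^ 2) / (c * v + √(v ^ 2 - c ^ 2)) := by
  have : 0 < c * v + √(v ^ 2 - c ^ 2) := by positivity
  rw [kernel]
  field_simp
  ring

theorem one_sub_mul_kernel_pos (hc : 0 < c) {v : ℝ} (hv : c < v) : 0 < 1 - v * kernel c v := by
  have : 0 < √(v ^ 2 - c ^ 2) := sqrt_pos.2 (by nlinarith)
  have : 0 < v := hc.trans hv
  rw [one_sub_mul_kernel hc this]
  positivity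

theorem kernel_div_one_sub_mul_kernel (hc : 0 < c) {v : ℝ} (hv : c < v) :
    kernel c v / (1 - v * kernel c v) = c / √(v ^ 2 - c ^ 2) := by
  have : 0 < √(v ^ 2 - c ^ 2) := sqrt_pos.2 (by nlinarith)
  have : 0 < c * v + √(v ^ 2 - c ^ 2) := by nlinarith
  rw [one_sub_mul_kernel hc (hc.trans hv), kernel, div_div_div_cancel_right₀ this.ne']

theorem kernel_le (hc : 0 < c) {t : ℝ} (ht : 2 * c ≤ t) :
    kernel c t ≤ 2 * c / (2 * c + 1) * t⁻¹ := by
  have ht0 : 0 < t := by linarith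
  have hsqrt : t / 2 ≤ √(t ^ 2 - c ^ 2) := le_sqrt_of_sq_le (by nlinarith)
  rw [kernel, div_mul_eq_mul_div, ← div_eq_mul_inv, div_div,
    div_le_div_iff₀ (by positivity) (by positivity)]
  nlinarith

theorem kernelIntegral_le (hc : 0 < c) {v : ℝ} (hv : 2 * c ≤ v) :
    kernelIntegral c v ≤ kernelIntegral c (2 * c) + 2 * c / (2 * c + 1) * log (v / (2 * c)) := by
  have h2c : 0 < 2 * c := by linarith
  have hv0 : 0 < v := h2c.trans_le hv
  have hsplit : kernelIntegral c v = kernelIntegral c (2 * c) + ∫ t in (2 * c)..v, kernel c t :=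
    (intervalIntegral.integral_add_adjacent_intervals (intervalIntegrable_kernel hc hc h2c)
      (intervalIntegrable_kernel hc h2c hv0)).symm
  have hzero : (0 : ℝ) ∉ uIcc (2 * c) v := fun h => by
    rw [uIcc_of_le hv] at h; linarith [h.1]
  have hinv : IntervalIntegrable (fun t => 2 * c / (2 * c + 1) * t⁻¹) volume (2 * c) v :=
    (intervalIntegral.intervalIntegrable_inv (fun _ ht h => hzero (h ▸ ht))
      continuousOn_id).const_mul _
  have hbound : ∫ t in (2 * c)..v, kernel c t ≤ ∫ t in (2 * c)..v, 2 * c / (2 * c + 1) * t⁻¹ :=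
    intervalIntegral.integral_mono_on hv (intervalIntegrable_kernel hc h2c hv0) hinv
      fun t ht => kernel_le hc ht.1
  rw [intervalIntegral.integral_const_mul, integral_inv hzero] at hbound
  linarith

theorem tendsto_paramS_atTop (hc : 0 < c) : Tendsto (paramS c) atTop atTop := by
  set β := 2 * c / (2 * c + 1)
  set C := β * log (2 * c) - kernelIntegral c (2 * c)
  have hβ : 0 < 1 - β := by
    rw [sub_pos, div_lt_one (by linarith)]; linarith
  have hlower : Tendsto (fun v => exp ((1 - β) * log v + C) / c) atTop atTop :=
    (tendsto_exp_atTop.comp (tendsto_atTop_add_const_right _ C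
      (tendsto_log_atTop.const_mul_atTop hβ))).atTop_div_const hc
  refine tendsto_atTop_mono' _ ?_ hlower
  filter_upwards [eventually_ge_atTop (2 * c)] with v hv
  have hv0 : 0 < v := by linarith
  have hF := kernelIntegral_le hc hv
  rw [log_div hv0.ne' (by linarith)] at hF
  calc exp ((1 - β) * log v + C) / c ≤ exp (log v - kernelIntegral c v) / c := by
        gcongr; linarith
    _ = paramS c v := by
        rw [exp_sub, exp_log hv0, paramS, paramG, exp_neg]; ring

theorem paramG_pos (hc : 0 < c) (v : ℝ) : 0 < paramG c v := div_pos (exp_pos _) hc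

theorem paramG_self : paramG c c = 1 / c := by simp [paramG, kernelIntegral]

theorem paramS_self (hc : 0 < c) : paramS c c = 1 := by
  rw [paramS, paramG_self, mul_one_div_cancel hc.ne']

theorem hasDerivAt_paramG (hc : 0 < c) {v : ℝ} (hv : 0 < v) :
    HasDerivAt (paramG c) (-(paramG c v * kernel c v)) v :=
  ((hasDerivAt_kernelIntegral hc hv).neg.exp.div_const c).congr_deriv (by
    simp only [paramG, Pi.neg_apply]; ring)

theorem hasDerivAt_paramS (hc : 0 < c) {v : ℝ} (hv : 0 < v) :
    HasDerivAt (paramS c) (paramG c v * (1 - v * kernel c v)) v :=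
  ((hasDerivAt_id v).mul (hasDerivAt_paramG hc hv)).congr_deriv (by simp only [id]; ring)

theorem continuousOn_paramG (hc : 0 < c) : ContinuousOn (paramG c) (Ici c) := fun _ hv =>
  (hasDerivAt_paramG hc (hc.trans_le hv)).continuousAt.continuousWithinAt

theorem continuousOn_paramS (hc : 0 < c) : ContinuousOn (paramS c) (Ici c) := fun _ hv =>
  (hasDerivAt_paramS hc (hc.trans_le hv)).continuousAt.continuousWithinAt

theorem strictAntiOn_paramG (hc : 0 < c) : StrictAntiOn (paramG c) (Ici c) :=
  fun _ hx _ hy hxy => div_lt_div_of_pos_right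
    (exp_lt_exp.2 (neg_lt_neg (strictMonoOn_kernelIntegral hc hx hy hxy))) hc

theorem strictMonoOn_paramS (hc : 0 < c) : StrictMonoOn (paramS c) (Ici c) := by
  refine strictMonoOn_of_deriv_pos (convex_Ici c) (continuousOn_paramS hc) fun v hv => ?_
  rw [interior_Ici] at hv
  rw [(hasDerivAt_paramS hc (hc.trans hv)).deriv]
  exact mul_pos (paramG_pos hc v) (one_sub_mul_kernel_pos hc hv)

theorem image_paramS_Ici (hc : 0 < c) : paramS c '' Ici c = Ici 1 :=
  paramS_self hc ▸ (continuousOn_paramS hc).image_Ici_of_monotoneOn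
    (strictMonoOn_paramS hc).monotoneOn (tendsto_paramS_atTop hc)

theorem bijOn_paramS (hc : 0 < c) : BijOn (paramS c) (Ici c) (Ici 1) :=
  image_paramS_Ici hc ▸ (strictMonoOn_paramS hc).injOn.bijOn_image

theorem param_mem_Ici (hc : 0 < c) {s : ℝ} (hs : 1 ≤ s) : c ≤ param c s :=
  (bijOn_paramS hc).surjOn.mapsTo_invFunOn hs

theorem paramS_param (hc : 0 < c) {s : ℝ} (hs : 1 ≤ s) : paramS c (param c s) = s :=
  (bijOn_paramS hc).surjOn.rightInvOn_invFunOn hs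

theorem param_one (hc : 0 < c) : param c 1 = c := by
  have h := (bijOn_paramS hc).invOn_invFunOn.1 (self_mem_Ici (a := c))
  rwa [paramS_self hc] at h

theorem lt_param (hc : 0 < c) {s : ℝ} (hs : 1 < s) : c < param c s :=
  (param_mem_Ici hc hs.le).lt_of_ne fun h =>
    hs.ne' (by rw [← paramS_param hc hs.le, ← h, paramS_self hc])

theorem solution_pos (hc : 0 < c) (s : ℝ) : 0 < solution c s := paramG_pos hc _

theorem div_solution (hc : 0 < c) {s : ℝ} (hs : 1 ≤ s) : s / solution c s = param c s := by
  rw [div_eq_iff (solution_pos hc s).ne']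
  exact (paramS_param hc hs).symm

theorem continuousOn_param (hc : 0 < c) : ContinuousOn (param c) (Ici 1) := by
  have hbij : BijOn (paramS c) (Ici c) (Ici (paramS c c)) := by
    rw [paramS_self hc]; exact bijOn_paramS hc
  have h := (strictMonoOn_paramS hc).continuousOn_invFunOn_Ici hbij
  rwa [paramS_self hc] at h

theorem hasDerivAt_param (hc : 0 < c) {s : ℝ} (hs : 1 < s) :
    HasDerivAt (param c)
      (paramG c (param c s) * (1 - param c s * kernel c (param c s)))⁻¹ s := by
  have hv := lt_param hc hs
  refine HasDerivAt.of_local_left_inverse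
    ((continuousOn_param hc).continuousAt (Ici_mem_nhds hs))
    (hasDerivAt_paramS hc (hc.trans hv))
    (mul_pos (paramG_pos hc _) (one_sub_mul_kernel_pos hc hv)).ne' ?_
  filter_upwards [Ici_mem_nhds hs] with x hx using paramS_param hc hx

theorem continuousOn_solution (hc : 0 < c) : ContinuousOn (solution c) (Ici 1) :=
  (continuousOn_paramG hc).comp (continuousOn_param hc) fun _ hs => param_mem_Ici hc hs

theorem solution_one (hc : 0 < c) : solution c 1 = 1 / c := by
  rw [solution, Function.comp_apply, param_one hc, paramG_self]

theorem strictAntiOn_solution (hc : 0 < c) : StrictAntiOn (solution c) (Ici 1) :=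
  (strictAntiOn_paramG hc).comp_strictMonoOn
    ((strictMonoOn_paramS hc).strictMonoOn_invFunOn (bijOn_paramS hc).surjOn)
    fun _ hs => param_mem_Ici hc hs

theorem hasDerivAt_solution (hc : 0 < c) {s : ℝ} (hs : 1 < s) :
    HasDerivAt (solution c) (-c / √((s / solution c s) ^ 2 - c ^ 2)) s := by
  have hv := lt_param hc hs
  have hG := (paramG_pos hc (param c s)).ne'
  refine ((hasDerivAt_paramG hc (hc.trans hv)).comp s (hasDerivAt_param hc hs)).congr_deriv ?_
  rw [div_solution hc hs.le, neg_div, ← kernel_div_one_sub_mul_kernel hc hv]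
  field_simp

theorem solution_lt (hc : 0 < c) {s : ℝ} (hs : 1 < s) : solution c s < s / c := by
  rw [lt_div_iff₀ hc]
  calc solution c s * c < solution c s * param c s :=
        mul_lt_mul_of_pos_left (lt_param hc hs) (solution_pos hc s)
    _ = s := by rw [← div_solution hc hs.le, mul_div_cancel₀ _ (solution_pos hc s).ne']

end SingularIVP

open SingularIVP

/-- The singular initial value problem (37):
`g' = −λ₁ g / √(s²λ_η² − λ₁² g²)`, `g(1) = λ_η/λ₁`, has a solution defined on
`[1,∞)`, which is positive, strictly decreasing, and satisfies
`g(s) < s λ_η/λ₁` for `s > 1`. -/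
theorem singular_ivp_solution (lam1 lamEta : ℝ) (h1 : 0 < lam1) (hEta : 0 < lamEta) :
    ∃ g : ℝ → ℝ,
      ContinuousOn g (Ici 1) ∧
      g 1 = lamEta / lam1 ∧
      (∀ s ∈ Ioi (1 : ℝ),
        HasDerivAt g (-(lam1 * g s) / Real.sqrt (s ^ 2 * lamEta ^ 2 - lam1 ^ 2 * g s ^ 2)) s) ∧
      (∀ s ∈ Ici (1 : ℝ), 0 < g s) ∧
      StrictAntiOn g (Ici 1) ∧
      (∀ s ∈ Ioi (1 : ℝ), g s < s * lamEta / lam1) := by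
  have hc : 0 < lam1 / lamEta := div_pos h1 hEta
  refine ⟨solution (lam1 / lamEta), continuousOn_solution hc, ?_, fun s hs => ?_,
    fun s _ => solution_pos hc s, strictAntiOn_solution hc, fun s hs => ?_⟩
  · rw [solution_one hc, one_div_div]
  · rw [rhs_homogeneous hEta (solution_pos hc s)]
    exact hasDerivAt_solution hc hs
  · rw [← div_div_eq_mul_div]
    exact solution_lt hc hs
end

section
/- Let V(u) = ½(−Σ_{i=1}^m λᵢ² uᵢ² + Σ_{i=m+1}^n λᵢ² uᵢ²) with λᵢ > 0, η a unit vector in span{e_{m+1},…,e_n}, λ_η as above, and let g solve g'(s) = −λ₁ g/√(s²λ_η² − λ₁²g²) on (1, s₀] with g(1) = λ_η/λ₁. Then the perturbed path v̄(s) = sη + g(s)e₁ satisfies √(V(v̄(s))) √(1 + g'(s)²) = √(V(sη)) for s ∈ (1, s₀], hence 𝒥_V(v̄, (1, s₀)) = 𝒥_V(ū, (1, s₀)) where ū(s) = sη. -/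
open Set Real

/-!
Since `η ⊥ e₁`, the potential along `v̄(s) = sη + g(s)e₁` is `½(a² − b²)` with `a = sλ_η` and
`b = λ₁g(s)`, while the ODE gives `g'² = b²/(a² − b²)`. Hence `1 + g'² = a²/(a² − b²)`, and the
product `V(v̄)(1 + g'²)` collapses to `½a² = V(sη)`: the Jacobi integrands of `v̄` and `ū`
agree pointwise, so their integrals agree.
-/

lemma sum_mul_sq_smul_add_smul_single {ι : Type*} [Fintype ι] [DecidableEq ι] (c : ι → ℝ)
    (η : EuclideanSpace ℝ ι) (i₀ : ι) (hη : η i₀ = 0) (s t : ℝ) :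
    ∑ i, c i * (s • η + t • EuclideanSpace.single i₀ (1 : ℝ)) i ^ 2 =
      s ^ 2 * ∑ i, c i * η i ^ 2 + c i₀ * t ^ 2 := by
  have hterm : ∀ i, c i * (s • η + t • EuclideanSpace.single i₀ (1 : ℝ)) i ^ 2 =
      s ^ 2 * (c i * η i ^ 2) + if i = i₀ then c i₀ * t ^ 2 else 0 := by
    intro i
    by_cases hi : i = i₀
    · subst hi
      simp [hη]
    · simp only [PiLp.add_apply, PiLp.smul_apply, smul_eq_mul, PiLp.single_apply, if_neg hi]
      ring
  simp only [hterm, Finset.sum_add_distrib, Finset.mul_sum, Finset.sum_ite_eq',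
    Finset.mem_univ, if_true]

lemma sqrt_half_sub_mul_sqrt_one_add_sq {p q x : ℝ} (hqp : q < p) (hx : x ^ 2 = q / (p - q)) :
    √(1 / 2 * (p - q)) * √(1 + x ^ 2) = √(1 / 2 * p) := by
  have hpq : p - q ≠ 0 := (sub_pos.mpr hqp).ne'
  rw [← sqrt_mul (by linarith), hx]
  congr 1
  field_simp
  ring

theorem jacobi_of_perturbed_path_general (n m : ℕ) (hm : 1 ≤ m)
    (lam : Fin n → ℝ) (hlam : ∀ i, 0 < lam i)
    (V : EuclideanSpace ℝ (Fin n) → ℝ)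
    (hV : ∀ u : EuclideanSpace ℝ (Fin n),
      V u = (1 : ℝ) / 2 *
        ∑ i : Fin n, (if (i : ℕ) < m then -(lam i) ^ 2 else (lam i) ^ 2) * (u i) ^ 2)
    (η : EuclideanSpace ℝ (Fin n))
    (hsupp : ∀ i : Fin n, (i : ℕ) < m → η i = 0)
    (lamEta : ℝ) (hlamEta : lamEta = Real.sqrt (∑ i : Fin n, (lam i) ^ 2 * (η i) ^ 2))
    (i₀ : Fin n) (hi₀ : (i₀ : ℕ) = 0) (lam1 : ℝ) (hlam1 : lam1 = lam i₀)
    (s₀ : ℝ) (hs₀ : 1 < s₀) (g g' : ℝ → ℝ)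
    (hgpos : ∀ s ∈ Ioc (1 : ℝ) s₀, 0 < g s ∧ g s < s * lamEta / lam1)
    (hode : ∀ s ∈ Ioc (1 : ℝ) s₀,
      HasDerivAt g (g' s) s ∧
      g' s = -(lam1 * g s) / Real.sqrt (s ^ 2 * lamEta ^ 2 - lam1 ^ 2 * g s ^ 2)) :
    (∀ s ∈ Ioc (1 : ℝ) s₀,
      Real.sqrt (V (s • η + g s • EuclideanSpace.single i₀ (1 : ℝ))) *
        Real.sqrt (1 + g' s ^ 2) = Real.sqrt (V (s • η))) ∧
    (Real.sqrt 2 * ∫ s in (1 : ℝ)..s₀,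
        Real.sqrt (V (s • η + g s • EuclideanSpace.single i₀ (1 : ℝ))) *
          Real.sqrt (1 + g' s ^ 2)) =
      Real.sqrt 2 * ∫ s in (1 : ℝ)..s₀, Real.sqrt (V (s • η)) := by
  have hi₀m : (i₀ : ℕ) < m := by omega
  have hlam1_pos : 0 < lam1 := hlam1 ▸ hlam i₀
  have hlamEta_sq : ∑ i : Fin n, (if (i : ℕ) < m then -(lam i) ^ 2 else (lam i) ^ 2) * η i ^ 2 =
      lamEta ^ 2 := by
    rw [hlamEta, sq_sqrt (Finset.sum_nonneg fun i _ => by positivity)]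
    refine Finset.sum_congr rfl fun i _ => ?_
    split_ifs with hi <;> simp [hsupp i, hi]
  have hV_path : ∀ s t : ℝ, V (s • η + t • EuclideanSpace.single i₀ (1 : ℝ)) =
      1 / 2 * (s ^ 2 * lamEta ^ 2 - lam1 ^ 2 * t ^ 2) := by
    intro s t
    rw [hV, sum_mul_sq_smul_add_smul_single _ η i₀ (hsupp i₀ hi₀m), hlamEta_sq]
    rw [if_pos hi₀m, ← hlam1]
    ring
  have hV_line : ∀ s : ℝ, V (s • η) = 1 / 2 * (s ^ 2 * lamEta ^ 2) := fun s => by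
    simpa using hV_path s 0
  have hpt : ∀ s ∈ Ioc (1 : ℝ) s₀,
      √(V (s • η + g s • EuclideanSpace.single i₀ (1 : ℝ))) * √(1 + g' s ^ 2) = √(V (s • η)) := by
    intro s hs
    obtain ⟨hg_pos, hg_lt⟩ := hgpos s hs
    have hb_lt_a : lam1 * g s < s * lamEta := by
      rw [lt_div_iff₀ hlam1_pos] at hg_lt
      linarith
    have hD : lam1 ^ 2 * g s ^ 2 < s ^ 2 * lamEta ^ 2 := by
      nlinarith [mul_pos hlam1_pos hg_pos]
    have hg'_sq : g' s ^ 2 = lam1 ^ 2 * g s ^ 2 / (s ^ 2 * lamEta ^ 2 - lam1 ^ 2 * g s ^ 2) := by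
      rw [(hode s hs).2, div_pow, neg_sq, sq_sqrt (sub_pos.mpr hD).le, mul_pow]
    rw [hV_path, hV_line]
    exact sqrt_half_sub_mul_sqrt_one_add_sq hD hg'_sq
  refine ⟨hpt, congrArg _ ?_⟩
  exact intervalIntegral.integral_congr_Ioo_of_le hs₀.le fun s hs => hpt s (Ioo_subset_Ioc_self hs)

/-- Equality of Jacobi lengths (38): along the perturbed path
`v̄(s) = sη + g(s)e₁`, where `g` solves the ODE (37) and `e₁` is a coordinate
direction with negative eigenvalue `−λ₁²`, one has
`√(V(v̄(s)))√(1+g'(s)²) = √(V(sη))` on `(1,s₀]`, hence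
`𝒥_V(v̄,(1,s₀)) = 𝒥_V(ū,(1,s₀))`. -/
theorem jacobi_of_perturbed_path (n m : ℕ) (hm : 1 ≤ m) (hmn : m < n)
    (lam : Fin n → ℝ) (hlam : ∀ i, 0 < lam i)
    (V : EuclideanSpace ℝ (Fin n) → ℝ)
    (hV : ∀ u : EuclideanSpace ℝ (Fin n),
      V u = (1 : ℝ) / 2 *
        ∑ i : Fin n, (if (i : ℕ) < m then -(lam i) ^ 2 else (lam i) ^ 2) * (u i) ^ 2)
    (η : EuclideanSpace ℝ (Fin n)) (hη : ‖η‖ = 1)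
    (hsupp : ∀ i : Fin n, (i : ℕ) < m → η i = 0)
    (lamEta : ℝ) (hlamEta : lamEta = Real.sqrt (∑ i : Fin n, (lam i) ^ 2 * (η i) ^ 2))
    (i₀ : Fin n) (hi₀ : (i₀ : ℕ) = 0) (lam1 : ℝ) (hlam1 : lam1 = lam i₀)
    (s₀ : ℝ) (hs₀ : 1 < s₀) (g g' : ℝ → ℝ)
    (hg1 : g 1 = lamEta / lam1)
    (hgpos : ∀ s ∈ Ioc (1 : ℝ) s₀, 0 < g s ∧ g s < s * lamEta / lam1)
    (hode : ∀ s ∈ Ioc (1 : ℝ) s₀,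
      HasDerivAt g (g' s) s ∧
      g' s = -(lam1 * g s) / Real.sqrt (s ^ 2 * lamEta ^ 2 - lam1 ^ 2 * g s ^ 2)) :
    (∀ s ∈ Ioc (1 : ℝ) s₀,
      Real.sqrt (V (s • η + g s • EuclideanSpace.single i₀ (1 : ℝ))) *
        Real.sqrt (1 + g' s ^ 2) = Real.sqrt (V (s • η))) ∧
    (Real.sqrt 2 * ∫ s in (1 : ℝ)..s₀,
        Real.sqrt (V (s • η + g s • EuclideanSpace.single i₀ (1 : ℝ))) *
          Real.sqrt (1 + g' s ^ 2)) =
      Real.sqrt 2 * ∫ s in (1 : ℝ)..s₀, Real.sqrt (V (s • η)) :=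
  jacobi_of_perturbed_path_general n m hm lam hlam V hV η hsupp lamEta hlamEta i₀ hi₀ lam1 hlam1 s₀
    hs₀ g g' hgpos hode
end

section
/- For the potential U(x, λ) = 2λ⁴x₁² + x₂² − 2λ²x₁x₂ − 3λ²x₁⁴ + x₁⁶ on ℝ² with λ > 0, the critical points of U(·, λ) are exactly the five points p₀ = (0,0), ±p₁ and ±p₂, where p₁ = (λ√(1 − √(2/3)), λ³√(1 − √(2/3))) and p₂ = (λ√(1 + √(2/3)), λ³√(1 + √(2/3))). Moreover U(p₂, λ) < 0 = U(p₀, λ) < U(p₁, λ). -/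
open Set

lemma hasFDerivU (l : ℝ) (p : ℝ × ℝ) :
    HasFDerivAt (fun x : ℝ × ℝ =>
      2 * l ^ 4 * x.1 ^ 2 + x.2 ^ 2 - 2 * l ^ 2 * x.1 * x.2 - 3 * l ^ 2 * x.1 ^ 4 + x.1 ^ 6)
      ((4*l^4*p.1 - 2*l^2*p.2 - 12*l^2*p.1^3 + 6*p.1^5) • (ContinuousLinearMap.fst ℝ ℝ ℝ)
        + (2*p.2 - 2*l^2*p.1) • (ContinuousLinearMap.snd ℝ ℝ ℝ)) p := by
  have h1 : HasFDerivAt (fun x : ℝ × ℝ => x.1) (ContinuousLinearMap.fst ℝ ℝ ℝ) p :=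
    hasFDerivAt_fst
  have h2 : HasFDerivAt (fun x : ℝ × ℝ => x.2) (ContinuousLinearMap.snd ℝ ℝ ℝ) p :=
    hasFDerivAt_snd
  have q2 := (hasDerivAt_pow 2 p.1).comp_hasFDerivAt p h1
  have q4 := (hasDerivAt_pow 4 p.1).comp_hasFDerivAt p h1
  have q6 := (hasDerivAt_pow 6 p.1).comp_hasFDerivAt p h1
  have r2 := (hasDerivAt_pow 2 p.2).comp_hasFDerivAt p h2
  have H := ((((q2.const_mul (2*l^4)).add r2).sub
      ((h1.const_mul (2*l^2)).mul h2)).sub (q4.const_mul (3*l^2))).add q6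
  exact H.congr_fderiv (by ext v <;> simp <;> ring)

lemma clm_zero_iff (A B : ℝ) :
    A • (ContinuousLinearMap.fst ℝ ℝ ℝ) + B • (ContinuousLinearMap.snd ℝ ℝ ℝ) = 0 ↔
      A = 0 ∧ B = 0 := by
  constructor
  · intro h
    constructor
    · have := congrArg (fun L : ℝ × ℝ →L[ℝ] ℝ => L (1, 0)) h
      simpa using this
    · have := congrArg (fun L : ℝ × ℝ →L[ℝ] ℝ => L (0, 1)) h
      simpa using this
  · rintro ⟨rfl, rfl⟩
    simp

/-- Critical points of the perturbed potential (47):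
`U(x,λ) = 2λ⁴x₁² + x₂² − 2λ²x₁x₂ − 3λ²x₁⁴ + x₁⁶`.  For `λ > 0` the critical
points are exactly `p₀ = (0,0)`, `±p₁`, `±p₂`, with
`U(p₂,λ) < 0 = U(p₀,λ) < U(p₁,λ)`. -/
theorem perturbed_potential_critical_points (l : ℝ) (hl : 0 < l) :
    let U : ℝ × ℝ → ℝ := fun x =>
      2 * l ^ 4 * x.1 ^ 2 + x.2 ^ 2 - 2 * l ^ 2 * x.1 * x.2 - 3 * l ^ 2 * x.1 ^ 4 + x.1 ^ 6
    let p₁ : ℝ × ℝ :=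
      (l * Real.sqrt (1 - Real.sqrt (2 / 3)), l ^ 3 * Real.sqrt (1 - Real.sqrt (2 / 3)))
    let p₂ : ℝ × ℝ :=
      (l * Real.sqrt (1 + Real.sqrt (2 / 3)), l ^ 3 * Real.sqrt (1 + Real.sqrt (2 / 3)))
    (∀ p : ℝ × ℝ, fderiv ℝ U p = 0 ↔
      p ∈ ({(0, 0), p₁, -p₁, p₂, -p₂} : Set (ℝ × ℝ))) ∧
    U p₂ < 0 ∧ U (0, 0) = 0 ∧ 0 < U p₁ := by
  intro U p₁ p₂
  set s := Real.sqrt (2/3) with hs_def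
  have hs2 : s ^ 2 = 2/3 := Real.sq_sqrt (by norm_num)
  have hs_pos : 0 < s := Real.sqrt_pos.2 (by norm_num)
  have hs_lt : s < 1 := by nlinarith
  have hs_gt : 1/3 < s := by nlinarith
  set a := Real.sqrt (1 - s) with ha_def
  set b := Real.sqrt (1 + s) with hb_def
  have ha2 : a ^ 2 = 1 - s := Real.sq_sqrt (by linarith)
  have hb2 : b ^ 2 = 1 + s := Real.sq_sqrt (by linarith)
  have ha_pos : 0 < a := Real.sqrt_pos.2 (by linarith)
  have hb_pos : 0 < b := Real.sqrt_pos.2 (by linarith)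
  have hfd : ∀ p : ℝ × ℝ, fderiv ℝ U p =
      (4*l^4*p.1 - 2*l^2*p.2 - 12*l^2*p.1^3 + 6*p.1^5) • (ContinuousLinearMap.fst ℝ ℝ ℝ)
        + (2*p.2 - 2*l^2*p.1) • (ContinuousLinearMap.snd ℝ ℝ ℝ) :=
    fun p => (hasFDerivU l p).fderiv
  refine ⟨fun p => ?_, ?_, ?_, ?_⟩
  · rw [hfd p, clm_zero_iff]
    constructor
    · rintro ⟨hA, hB⟩
      have h2 : p.2 = l^2 * p.1 := by linarith
      have key : p.1 * ((p.1^2 - l^2*(1-s)) * (p.1^2 - l^2*(1+s))) = 0 := by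
        linear_combination (1/6) * hA + (l^2/6) * hB - l^4 * p.1 * hs2
      simp only [mem_insert_iff, mem_singleton_iff]
      rcases mul_eq_zero.1 key with h0 | hq
      · left
        have : p.2 = 0 := by rw [h2, h0]; ring
        exact Prod.ext h0 this
      · rcases mul_eq_zero.1 hq with hm | hp
        · have : (p.1 - l*a) * (p.1 + l*a) = 0 := by
            linear_combination hm - l^2 * ha2
          rcases mul_eq_zero.1 this with h | h
          · right; left
            have h1 : p.1 = l * a := by linarith
            exact Prod.ext h1 (by rw [h2, h1]; ring)
          · right; right; left
            have h1 : p.1 = -(l * a) := by linarith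
            refine Prod.ext h1 ?_
            show p.2 = -(l^3 * a)
            rw [h2, h1]; ring
        · have : (p.1 - l*b) * (p.1 + l*b) = 0 := by
            linear_combination hp - l^2 * hb2
          rcases mul_eq_zero.1 this with h | h
          · right; right; right; left
            have h1 : p.1 = l * b := by linarith
            exact Prod.ext h1 (by rw [h2, h1]; ring)
          · right; right; right; right
            have h1 : p.1 = -(l * b) := by linarith
            refine Prod.ext h1 ?_
            show p.2 = -(l^3 * b)
            rw [h2, h1]; ring
    · intro hp
      simp only [mem_insert_iff, mem_singleton_iff] at hp
      rcases hp with rfl | rfl | rfl | rfl | rfl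
      · norm_num
      · constructor
        · show 4*l^4*(l*a) - 2*l^2*(l^3*a) - 12*l^2*(l*a)^3 + 6*(l*a)^5 = 0
          linear_combination (6*l^5*a*(a^2+(1-s)) - 12*l^5*a) * ha2 + 6*l^5*a * hs2
        · show 2*(l^3*a) - 2*l^2*(l*a) = 0
          ring
      · constructor
        · show 4*l^4*(-(l*a)) - 2*l^2*(-(l^3*a)) - 12*l^2*(-(l*a))^3 + 6*(-(l*a))^5 = 0
          linear_combination (-(6*l^5*a*(a^2+(1-s))) + 12*l^5*a) * ha2 - 6*l^5*a * hs2
        · show 2*(-(l^3*a)) - 2*l^2*(-(l*a)) = 0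
          ring
      · constructor
        · show 4*l^4*(l*b) - 2*l^2*(l^3*b) - 12*l^2*(l*b)^3 + 6*(l*b)^5 = 0
          linear_combination (6*l^5*b*(b^2+(1+s)) - 12*l^5*b) * hb2 + 6*l^5*b * hs2
        · show 2*(l^3*b) - 2*l^2*(l*b) = 0
          ring
      · constructor
        · show 4*l^4*(-(l*b)) - 2*l^2*(-(l^3*b)) - 12*l^2*(-(l*b))^3 + 6*(-(l*b))^5 = 0
          linear_combination (-(6*l^5*b*(b^2+(1+s))) + 12*l^5*b) * hb2 - 6*l^5*b * hs2
        · show 2*(-(l^3*b)) - 2*l^2*(-(l*b)) = 0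
          ring
  · show 2*l^4*(l*b)^2 + (l^3*b)^2 - 2*l^2*(l*b)*(l^3*b) - 3*l^2*(l*b)^4 + (l*b)^6 < 0
    have hU2 : 2*l^4*(l*b)^2 + (l^3*b)^2 - 2*l^2*(l*b)*(l^3*b) - 3*l^2*(l*b)^4 + (l*b)^6
        = l^6 * ((1+s) - 3*(1+s)^2 + (1+s)^3) := by
      linear_combination (l^6*b^4 + l^6*b^2*(1+s) + l^6*(1+s)^2 - 3*l^6*b^2 - 3*l^6*(1+s) + l^6) * hb2
    have he2 : (1+s) - 3*(1+s)^2 + (1+s)^3 = -((1+s)*(1/3+s)) := by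
      linear_combination (1+s)*hs2
    rw [hU2, he2]
    have hl6 : 0 < l^6 := by positivity
    have hx : 0 < (1+s)*(1/3+s) := by nlinarith
    nlinarith [mul_pos hl6 hx]
  · show 2*l^4*(0:ℝ)^2 + (0:ℝ)^2 - 2*l^2*0*0 - 3*l^2*0^4 + 0^6 = 0
    ring
  · show 0 < 2*l^4*(l*a)^2 + (l^3*a)^2 - 2*l^2*(l*a)*(l^3*a) - 3*l^2*(l*a)^4 + (l*a)^6
    have hU1 : 2*l^4*(l*a)^2 + (l^3*a)^2 - 2*l^2*(l*a)*(l^3*a) - 3*l^2*(l*a)^4 + (l*a)^6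
        = l^6 * ((1-s) - 3*(1-s)^2 + (1-s)^3) := by
      linear_combination (l^6*a^4 + l^6*a^2*(1-s) + l^6*(1-s)^2 - 3*l^6*a^2 - 3*l^6*(1-s) + l^6) * ha2
    have he1 : (1-s) - 3*(1-s)^2 + (1-s)^3 = (1-s)*(s-1/3) := by
      linear_combination (1-s)*hs2
    rw [hU1, he1]
    have hl6 : 0 < l^6 := by positivity
    exact mul_pos hl6 (mul_pos (by linarith) (by linarith))
end

section
/- Let u*: (T₋, T₊) → ℝⁿ with T₊ < ∞ be a solution of ü = ∇U(u) with ½|u̇|² = U(u) and lim_{t→T₊} u*(t) = x₊ where U(x₊) = 0. Define v*(T₊ + t) = u*(T₊ − t) for t ∈ (0, T₊ − T₋), v*(T₊) = x₊. Then v* is a C² solution of ü = ∇U(u) on (T₋, 2T₊ − T₋) satisfying ½|v̇*|² = U(v*), with v̇*(T₊) = 0. -/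
open Set Filter Topology

/-!
Reflecting a zero-energy solution at the time `T₊` (even reflection for the position, odd
reflection for the velocity) gives again a solution on each side of `T₊`, since the equation
`ü = ∇U(u)` is invariant under `t ↦ 2T₊ - t`. At `T₊` itself both pieces are continuous
(position `x₊`, velocity `0`), and so is `∇U ∘ v`; a function of one real variable that is
continuous at a point and whose derivative extends continuously to it is differentiable there.
The energy identity at `T₊` is `U(x₊) = 0`.
-/

theorem ContDiff.continuous_gradient {F : Type*} [NormedAddCommGroup F] [InnerProductSpace ℝ F]
    [CompleteSpace F] {U : F → ℝ} (hU : ContDiff ℝ 2 U) : Continuous (gradient U) :=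
  (InnerProductSpace.toDual ℝ F).symm.continuous.comp (hU.continuous_fderiv (by norm_num))

section Reflection

variable {E : Type*} [NormedAddCommGroup E] [NormedSpace ℝ E]

theorem hasDerivAt_of_eventually_hasDerivAt_of_ne {f g : ℝ → E} {x : ℝ}
    (hderiv : ∀ᶠ y in 𝓝[≠] x, HasDerivAt f (g y) y) (hf : ContinuousAt f x)
    (hg : ContinuousAt g x) : HasDerivAt f (g x) x := by
  set s := {y | HasDerivAt f (g y) y}
  have hdiff : DifferentiableOn ℝ f s := fun y hy => hy.differentiableAt.differentiableWithinAt
  have hderiv_eq : ∀ᶠ y in 𝓝[≠] x, g y = deriv f y := hderiv.mono fun y hy => hy.deriv.symm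
  have hleft : HasDerivWithinAt f (g x) (Iic x) x :=
    hasDerivWithinAt_Iic_of_tendsto_deriv hdiff hf.continuousWithinAt
      (nhdsLT_le_nhdsNE x hderiv)
      ((hg.tendsto.mono_left nhdsWithin_le_nhds).congr' (nhdsLT_le_nhdsNE x hderiv_eq))
  have hright : HasDerivWithinAt f (g x) (Ici x) x :=
    hasDerivWithinAt_Ici_of_tendsto_deriv hdiff hf.continuousWithinAt
      (nhdsGT_le_nhdsNE x hderiv)
      ((hg.tendsto.mono_left nhdsWithin_le_nhds).congr' (nhdsGT_le_nhdsNE x hderiv_eq))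
  simpa using hleft.union hright

/-- The even (`σ = 1`) or odd (`σ = -1`) reflection of `f|(-∞, T)` at `T`. -/
noncomputable def reflectAt (T σ : ℝ) (c : E) (f : ℝ → E) (t : ℝ) : E :=
  if t < T then f t else if t = T then c else σ • f (2 * T - t)

variable {T σ t : ℝ} {c : E} {f : ℝ → E}

theorem reflectAt_of_lt (ht : t < T) : reflectAt T σ c f t = f t := if_pos ht

@[simp]
theorem reflectAt_self : reflectAt T σ c f T = c := by simp [reflectAt]

theorem reflectAt_of_gt (ht : T < t) : reflectAt T σ c f t = σ • f (2 * T - t) := by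
  simp [reflectAt, ht.not_gt, ht.ne']

theorem reflectAt_add (ht : 0 < t) : reflectAt T σ c f (T + t) = σ • f (T - t) := by
  rw [reflectAt_of_gt (by linarith)]
  congr 2
  ring

theorem tendsto_two_mul_sub_nhdsGT : Tendsto (fun t => 2 * T - t) (𝓝[>] T) (𝓝[<] T) := by
  refine tendsto_nhdsWithin_iff.2 ⟨?_, eventually_nhdsWithin_of_forall fun t (ht : T < t) => ?_⟩
  · have hcont : Continuous fun t : ℝ => 2 * T - t := by fun_prop
    simpa [two_mul] using hcont.continuousAt.tendsto.mono_left (nhdsWithin_le_nhds (a := T))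
  · show 2 * T - t < T
    linarith

theorem continuousAt_reflectAt (hf : Tendsto f (𝓝[<] T) (𝓝 c)) (hσ : σ • c = c) :
    ContinuousAt (reflectAt T σ c f) T := by
  refine continuousAt_iff_continuous_left'_right'.2 ⟨?_, ?_⟩
  · rw [ContinuousWithinAt, reflectAt_self]
    exact hf.congr' (eventually_nhdsWithin_of_forall fun _ hs => (reflectAt_of_lt hs).symm)
  · rw [ContinuousWithinAt, reflectAt_self]
    have hright := (hf.comp tendsto_two_mul_sub_nhdsGT).const_smul σ
    rw [hσ] at hright
    exact hright.congr' (eventually_nhdsWithin_of_forall fun _ hs => (reflectAt_of_gt hs).symm)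

theorem hasDerivAt_reflectAt_of_lt {f' : E} (ht : t < T) (hf : HasDerivAt f f' t) :
    HasDerivAt (reflectAt T σ c f) f' t :=
  hf.congr_of_eventuallyEq <| eventually_of_mem (Iio_mem_nhds ht) fun _ hs => reflectAt_of_lt hs

theorem hasDerivAt_reflectAt_of_gt {f' : E} (ht : T < t) (hf : HasDerivAt f f' (2 * T - t)) :
    HasDerivAt (reflectAt T σ c f) (-σ • f') t := by
  have hcomp := (hf.scomp t ((hasDerivAt_id t).const_sub (2 * T))).const_smul σ
  refine (hcomp.congr_of_eventuallyEq ?_).congr_deriv ?_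
  · exact eventually_of_mem (Ioi_mem_nhds ht) fun _ hs => reflectAt_of_gt hs
  · simp

section SecondOrder

variable {F : E → E} {a T : ℝ} {u u' : ℝ → E} {x : E}

theorem hasDerivAt_reflectAt_of_ne
    (hu : ∀ t ∈ Ioo a T, HasDerivAt u (u' t) t)
    (hu' : ∀ t ∈ Ioo a T, HasDerivAt u' (F (u t)) t)
    {t : ℝ} (ht : t ∈ Ioo a (2 * T - a)) (htT : t ≠ T) :
    HasDerivAt (reflectAt T 1 x u) (reflectAt T (-1) 0 u' t) t ∧
      HasDerivAt (reflectAt T (-1) 0 u') (F (reflectAt T 1 x u t)) t := by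
  rcases htT.lt_or_gt with hlt | hgt
  · have hs : t ∈ Ioo a T := ⟨ht.1, hlt⟩
    rw [reflectAt_of_lt hlt, reflectAt_of_lt hlt]
    exact ⟨hasDerivAt_reflectAt_of_lt hlt (hu t hs), hasDerivAt_reflectAt_of_lt hlt (hu' t hs)⟩
  · have hs : 2 * T - t ∈ Ioo a T := ⟨by linarith [ht.2], by linarith⟩
    rw [reflectAt_of_gt hgt, reflectAt_of_gt hgt]
    constructor
    · exact hasDerivAt_reflectAt_of_gt hgt (hu _ hs)
    · simpa using hasDerivAt_reflectAt_of_gt (σ := -1) (c := 0) hgt (hu' _ hs)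

theorem hasDerivAt_reflectAt
    (hu : ∀ t ∈ Ioo a T, HasDerivAt u (u' t) t)
    (hu' : ∀ t ∈ Ioo a T, HasDerivAt u' (F (u t)) t)
    (hF : ContinuousAt F x) (hux : Tendsto u (𝓝[<] T) (𝓝 x))
    (hu'0 : Tendsto u' (𝓝[<] T) (𝓝 0)) {t : ℝ} (ht : t ∈ Ioo a (2 * T - a)) :
    HasDerivAt (reflectAt T 1 x u) (reflectAt T (-1) 0 u' t) t ∧
      HasDerivAt (reflectAt T (-1) 0 u') (F (reflectAt T 1 x u t)) t := by
  rcases ne_or_eq t T with htT | htT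
  · exact hasDerivAt_reflectAt_of_ne hu hu' ht htT
  subst t
  have hnear : ∀ᶠ s in 𝓝[≠] T, s ∈ Ioo a (2 * T - a) ∧ s ≠ T :=
    (eventually_nhdsWithin_of_eventually_nhds (Ioo_mem_nhds ht.1 ht.2)).and self_mem_nhdsWithin
  have hderiv := hnear.mono fun s hs => hasDerivAt_reflectAt_of_ne (x := x) hu hu' hs.1 hs.2
  have hpos : ContinuousAt (reflectAt T 1 x u) T := continuousAt_reflectAt hux (one_smul ℝ x)
  have hvel : ContinuousAt (reflectAt T (-1) 0 u') T := continuousAt_reflectAt hu'0 (smul_zero _)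
  have hforce : ContinuousAt (fun s => F (reflectAt T 1 x u s)) T := by
    refine ContinuousAt.comp ?_ hpos
    rwa [reflectAt_self]
  exact ⟨hasDerivAt_of_eventually_hasDerivAt_of_ne (hderiv.mono fun _ h => h.1) hpos hvel,
    hasDerivAt_of_eventually_hasDerivAt_of_ne (hderiv.mono fun _ h => h.2) hvel hforce⟩

end SecondOrder

end Reflection

theorem reflection_extension_general (n : ℕ) (U : EuclideanSpace ℝ (Fin n) → ℝ)
    (hU : ContDiff ℝ 2 U) (Tm Tp : ℝ)
    (u u' : ℝ → EuclideanSpace ℝ (Fin n))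
    (hu : ∀ t ∈ Ioo Tm Tp, HasDerivAt u (u' t) t)
    (hu' : ∀ t ∈ Ioo Tm Tp, HasDerivAt u' (gradient U (u t)) t)
    (hen : ∀ t ∈ Ioo Tm Tp, (1 : ℝ) / 2 * ‖u' t‖ ^ 2 = U (u t))
    (xp : EuclideanSpace ℝ (Fin n)) (hxp : U xp = 0)
    (hlim : Tendsto u (𝓝[<] Tp) (𝓝 xp))
    (hlim' : Tendsto u' (𝓝[<] Tp) (𝓝 0)) :
    ∃ v v' : ℝ → EuclideanSpace ℝ (Fin n),
      (∀ t ∈ Ioo Tm Tp, v t = u t) ∧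
      v Tp = xp ∧
      (∀ t ∈ Ioo (0 : ℝ) (Tp - Tm), v (Tp + t) = u (Tp - t)) ∧
      (∀ t ∈ Ioo Tm (2 * Tp - Tm),
        HasDerivAt v (v' t) t ∧
        HasDerivAt v' (gradient U (v t)) t ∧
        (1 : ℝ) / 2 * ‖v' t‖ ^ 2 = U (v t)) ∧
      v' Tp = 0 := by
  refine ⟨reflectAt Tp 1 xp u, reflectAt Tp (-1) 0 u', fun t ht => reflectAt_of_lt ht.2,
    reflectAt_self, fun t ht => by simp [reflectAt_add ht.1], fun t ht => ?_, reflectAt_self⟩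
  obtain ⟨hpos, hvel⟩ := hasDerivAt_reflectAt hu hu'
    hU.continuous_gradient.continuousAt hlim hlim' ht
  refine ⟨hpos, hvel, ?_⟩
  rcases lt_trichotomy t Tp with hlt | rfl | hgt
  · rw [reflectAt_of_lt hlt, reflectAt_of_lt hlt]
    exact hen t ⟨ht.1, hlt⟩
  · simp [hxp]
  · rw [reflectAt_of_gt hgt, reflectAt_of_gt hgt, norm_smul]
    simpa using hen (2 * Tp - t) ⟨by linarith [ht.2], by linarith⟩

/-- Reflection principle (Corollary 1.2): a zero-energy solution of
`ü = ∇U(u)` on `(T₋,T₊)` reaching a zero `x₊` of `U` at the finite time `T₊`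
with vanishing velocity extends, by time reversal, to a `C²` zero-energy
solution on `(T₋, 2T₊ − T₋)` with `v̇(T₊) = 0`. -/
theorem reflection_extension (n : ℕ) (U : EuclideanSpace ℝ (Fin n) → ℝ)
    (hU : ContDiff ℝ 2 U) (Tm Tp : ℝ) (hT : Tm < Tp)
    (u u' : ℝ → EuclideanSpace ℝ (Fin n))
    (hu : ∀ t ∈ Ioo Tm Tp, HasDerivAt u (u' t) t)
    (hu' : ∀ t ∈ Ioo Tm Tp, HasDerivAt u' (gradient U (u t)) t)
    (hen : ∀ t ∈ Ioo Tm Tp, (1 : ℝ) / 2 * ‖u' t‖ ^ 2 = U (u t))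
    (xp : EuclideanSpace ℝ (Fin n)) (hxp : U xp = 0)
    (hlim : Tendsto u (𝓝[<] Tp) (𝓝 xp))
    (hlim' : Tendsto u' (𝓝[<] Tp) (𝓝 0)) :
    ∃ v v' : ℝ → EuclideanSpace ℝ (Fin n),
      (∀ t ∈ Ioo Tm Tp, v t = u t) ∧
      v Tp = xp ∧
      (∀ t ∈ Ioo (0 : ℝ) (Tp - Tm), v (Tp + t) = u (Tp - t)) ∧
      (∀ t ∈ Ioo Tm (2 * Tp - Tm),
        HasDerivAt v (v' t) t ∧
        HasDerivAt v' (gradient U (v t)) t ∧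
        (1 : ℝ) / 2 * ‖v' t‖ ^ 2 = U (v t)) ∧
      v' Tp = 0 :=
  reflection_extension_general n U hU Tm Tp u u' hu hu' hen xp hxp hlim hlim'
end
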